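/- For every integer d ≥ 2, every i ∈ [d], and every integer k ≥ 1, the k-egonet of a_i in the CFI gadget X_d is isomorphic to the k-egonet of b_i in X_d; that is, the subgraphs of X_d induced on N_k(a_i) and on N_k(b_i) are isomorphic. -/

import Mathlib

open scoped symmDiff

inductive CFIVertex (d : ℕ) : Type where
  | a : Fin d → CFIVertex d
  | b : Fin d → CFIVertex d
  | m : {S : Finset (Fin d) // Even S.card} → CFIVertex d

def CFIAdj (d : ℕ) : CFIVertex d → CFIVertex d → Prop
  | .m S, .a i => i ∈ S.1
  | .a i, .m S => i ∈ S.1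
  | .m S, .b i => i ∉ S.1
  | .b i, .m S => i ∉ S.1
  | _, _ => False

def CFI (d : ℕ) : SimpleGraph (CFIVertex d) where
  Adj := CFIAdj d
  symm := by
    constructor
    intro x y h
    cases x <;> cases y <;> exact h
  loopless := by
    constructor
    intro x
    cases x <;> exact fun h => h

lemma even_card_symmDiff {α : Type*} [DecidableEq α] {S T : Finset α}
    (hS : Even S.card) (hT : Even T.card) : Even ((T ∆ S).card) := by
  have h0 : (T ∆ S).card = (T \ S).card + (S \ T).card := by
    rw [symmDiff_def]
    exact Finset.card_union_of_disjoint disjoint_sdiff_sdiff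
  have h1 : (T \ S).card + (T ∩ S).card = T.card := Finset.card_sdiff_add_card_inter T S
  have h2 : (S \ T).card + (S ∩ T).card = S.card := Finset.card_sdiff_add_card_inter S T
  have h3 : (T ∩ S).card = (S ∩ T).card := by rw [Finset.inter_comm]
  rw [Nat.even_iff] at *
  omega

def sigmaS (d : ℕ) (S : Finset (Fin d)) (hS : Even S.card) : CFIVertex d → CFIVertex d
  | .a i => if i ∈ S then .b i else .a i
  | .b i => if i ∈ S then .a i else .b i
  | .m T => .m ⟨T.1 ∆ S, even_card_symmDiff hS T.2⟩


/-- The `k`-egonet of `v` in `G`: the subgraph of `G` induced on the set `N_k(v)` of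
vertices at graph distance at most `k` from `v`. -/
def egonet {V : Type*} (G : SimpleGraph V) (k : ℕ) (v : V) :
    SimpleGraph {u : V | G.Reachable v u ∧ G.dist v u ≤ k} :=
  G.induce {u : V | G.Reachable v u ∧ G.dist v u ≤ k}

lemma sigmaS_invol (d : ℕ) (S : Finset (Fin d)) (hS : Even S.card) (x : CFIVertex d) :
    sigmaS d S hS (sigmaS d S hS x) = x := by
  cases x with
  | a i => by_cases h : i ∈ S <;> simp [sigmaS, h]
  | b i => by_cases h : i ∈ S <;> simp [sigmaS, h]
  | m T => simp [sigmaS, symmDiff_symmDiff_cancel_right]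

lemma sigmaS_adj (d : ℕ) (S : Finset (Fin d)) (hS : Even S.card) (x y : CFIVertex d) :
    (CFI d).Adj (sigmaS d S hS x) (sigmaS d S hS y) ↔ (CFI d).Adj x y := by
  cases x <;> cases y <;>
    simp only [sigmaS, CFI] <;>
    first
      | (rename_i i T; by_cases h : i ∈ S <;>
          simp [CFIAdj, h, Finset.mem_symmDiff] <;> tauto)
      | (rename_i T i; by_cases h : i ∈ S <;>
          simp [CFIAdj, h, Finset.mem_symmDiff] <;> tauto)
      | (rename_i i j; by_cases h : i ∈ S <;> by_cases h' : j ∈ S <;>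
          simp [CFIAdj, h, h'])
      | simp [CFIAdj]

def sigmaIso (d : ℕ) (S : Finset (Fin d)) (hS : Even S.card) : CFI d ≃g CFI d where
  toFun := sigmaS d S hS
  invFun := sigmaS d S hS
  left_inv := sigmaS_invol d S hS
  right_inv := sigmaS_invol d S hS
  map_rel_iff' := by intro x y; exact sigmaS_adj d S hS x y

lemma iso_dist_le {V : Type*} {G : SimpleGraph V} (φ : G ≃g G) {u v : V}
    (h : G.Reachable u v) : G.dist (φ u) (φ v) ≤ G.dist u v := by
  obtain ⟨p, hp⟩ := h.exists_walk_length_eq_dist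
  calc G.dist (φ u) (φ v) ≤ (p.map φ.toHom).length := SimpleGraph.dist_le _
    _ = G.dist u v := by rw [SimpleGraph.Walk.length_map, hp]

lemma iso_dist_eq {V : Type*} {G : SimpleGraph V} (φ : G ≃g G) (u v : V) :
    G.dist (φ u) (φ v) = G.dist u v := by
  by_cases h : G.Reachable u v
  · refine le_antisymm (iso_dist_le φ h) ?_
    have h' : G.Reachable (φ u) (φ v) := h.map φ.toHom
    have := iso_dist_le φ.symm h'
    simpa using this
  · rw [SimpleGraph.dist_eq_zero_of_not_reachable h,
      SimpleGraph.dist_eq_zero_of_not_reachable (by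
        intro hr
        exact h (by simpa using hr.map φ.symm.toHom))]

def egonetIso {V : Type*} {G : SimpleGraph V} (φ : G ≃g G) (k : ℕ) (v : V) :
    egonet G k v ≃g egonet G k (φ v) where
  toEquiv := (Equiv.subtypeEquiv φ.toEquiv (by
    intro u
    simp only [Set.mem_setOf_eq]
    constructor
    · rintro ⟨hr, hd⟩
      exact ⟨hr.map φ.toHom, le_of_eq_of_le (iso_dist_eq φ v u) hd⟩
    · rintro ⟨hr, hd⟩
      refine ⟨?_, ?_⟩
      · have := hr.map φ.symm.toHom; simpa using this
      · exact le_of_eq_of_le (iso_dist_eq φ v u).symm hd))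
  map_rel_iff' := by
    intro x y
    exact φ.map_rel_iff'

/-- For every integer d ≥ 2, every i ∈ [d], and every integer k ≥ 1,
the k-egonet of a_i in the CFI gadget X_d is isomorphic to the k-egonet of b_i. -/
theorem cfi_egonet_a_iso_egonet_b (d : ℕ) (hd : 2 ≤ d) (i : Fin d) (k : ℕ) (hk : 1 ≤ k) :
    Nonempty (egonet (CFI d) k (CFIVertex.a i) ≃g egonet (CFI d) k (CFIVertex.b i)) := by
  obtain ⟨j, hj⟩ : ∃ j : Fin d, j ≠ i := by
    have : 1 < Fintype.card (Fin d) := by simp; omega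
    exact Fintype.exists_ne_of_one_lt_card this i
  set S : Finset (Fin d) := {i, j} with hSdef
  have hScard : S.card = 2 := Finset.card_pair (Ne.symm hj)
  have hS : Even S.card := by rw [hScard]; exact even_two
  have hmem : i ∈ S := Finset.mem_insert_self i {j}
  have hfix : sigmaS d S hS (CFIVertex.a i) = CFIVertex.b i := by
    simp [sigmaS, hmem]
  have := egonetIso (sigmaIso d S hS) k (CFIVertex.a i)
  rw [show (sigmaIso d S hS) (CFIVertex.a i) = CFIVertex.b i from hfix] at this
  exact ⟨this⟩
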